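/- Let A ∈ ℝ^{m×n}, b ∈ ℝᵐ, and M ∈ ℝ^{n×n} symmetric positive definite with Cholesky factorization M = Lᵀ L. Fix k ≥ 1 and let S_k := span{ (M⁻¹ Aᵀ A)^i M⁻¹ Aᵀ b : 0 ≤ i ≤ k−1 }. Let x_k be the unique minimal-M-norm minimizer of ‖Ax − b‖₂ over x ∈ S_k, and let x̄_k be the unique minimal-Euclidean-norm minimizer of ‖A L⁻¹ x̄ − b‖₂ over x̄ in the Krylov subspace K_k((A L⁻¹)ᵀ(A L⁻¹), (A L⁻¹)ᵀ b). Then x_k = L⁻¹ x̄_k. -/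

import Mathlib

open Matrix

/-- Euclidean norm of a vector. -/
noncomputable def eucNorm {m : ℕ} (x : Fin m → ℝ) : ℝ := Real.sqrt (x ⬝ᵥ x)

/-- M-weighted norm of a vector: ‖x‖_M = (xᵀ M x)^{1/2}. -/
noncomputable def mnorm {n : ℕ} (M : Matrix (Fin n) (Fin n) ℝ) (x : Fin n → ℝ) : ℝ :=
  Real.sqrt (x ⬝ᵥ M.mulVec x)

/-- Weighted matrix norm ‖A‖_{M,2} = sup_{x ≠ 0} ‖Ax‖₂ / ‖x‖_M. -/
noncomputable def wnorm {m n : ℕ} (A : Matrix (Fin m) (Fin n) ℝ)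
    (M : Matrix (Fin n) (Fin n) ℝ) : ℝ :=
  sSup {t : ℝ | ∃ x : Fin n → ℝ, x ≠ 0 ∧ t = eucNorm (A.mulVec x) / mnorm M x}

/-- The m×n "diagonal" matrix with entries σ₁,…,σ_r on the leading diagonal and zeros elsewhere. -/
noncomputable def wsvdSigma (m n r : ℕ) (σ : Fin r → ℝ) : Matrix (Fin m) (Fin n) ℝ :=
  Matrix.of fun i j => if h : (i : ℕ) = (j : ℕ) ∧ (i : ℕ) < r then σ ⟨i, h.2⟩ else 0


section Helpers

open Matrix

lemma enorm_eq_norm' {m : ℕ} (x : Fin m → ℝ) :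
    eucNorm x = ‖(WithLp.equiv 2 (Fin m → ℝ)).symm x‖ := by
  rw [EuclideanSpace.norm_eq, eucNorm, dotProduct]
  congr 1
  refine Finset.sum_congr rfl fun i _ => ?_
  simp [Real.norm_eq_abs, sq_abs, sq]

end Helpers

theorem stmt_19 {m n : ℕ} (A : Matrix (Fin m) (Fin n) ℝ) (b : Fin m → ℝ)
    (M L : Matrix (Fin n) (Fin n) ℝ) (hM : M.PosDef) (hChol : M = Lᵀ * L)
    (hL : IsUnit L) (k : ℕ) (hk : 1 ≤ k)
    (Sk : Submodule ℝ (Fin n → ℝ))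
    (hSk : Sk = Submodule.span ℝ (Set.range fun i : Fin k =>
      ((M⁻¹ * Aᵀ * A) ^ (i : ℕ)).mulVec ((M⁻¹ * Aᵀ).mulVec b)))
    (Kk : Submodule ℝ (Fin n → ℝ))
    (hKk : Kk = Submodule.span ℝ (Set.range fun i : Fin k =>
      (((A * L⁻¹)ᵀ * (A * L⁻¹)) ^ (i : ℕ)).mulVec ((A * L⁻¹)ᵀ.mulVec b)))
    (xk xbark : Fin n → ℝ)
    (hxk1 : xk ∈ Sk)
    (hxk2 : ∀ y ∈ Sk, eucNorm (A.mulVec xk - b) ≤ eucNorm (A.mulVec y - b))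
    (hxk3 : ∀ y ∈ Sk, (∀ z ∈ Sk, eucNorm (A.mulVec y - b) ≤ eucNorm (A.mulVec z - b)) →
      mnorm M xk ≤ mnorm M y)
    (hxb1 : xbark ∈ Kk)
    (hxb2 : ∀ y ∈ Kk, eucNorm ((A * L⁻¹).mulVec xbark - b) ≤ eucNorm ((A * L⁻¹).mulVec y - b))
    (hxb3 : ∀ y ∈ Kk,
      (∀ z ∈ Kk, eucNorm ((A * L⁻¹).mulVec y - b) ≤ eucNorm ((A * L⁻¹).mulVec z - b)) →
        eucNorm xbark ≤ eucNorm y) :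
    xk = (L⁻¹).mulVec xbark := by
  classical
  -- basic invertibility facts
  have hLdet : IsUnit L.det := (Matrix.isUnit_iff_isUnit_det L).mp hL
  have hinv1 : L⁻¹ * L = 1 := Matrix.nonsing_inv_mul L hLdet
  have hinv2 : L * L⁻¹ = 1 := Matrix.mul_nonsing_inv L hLdet
  set C : Matrix (Fin m) (Fin n) ℝ := A * L⁻¹ with hC
  have hMinv : M⁻¹ = L⁻¹ * (L⁻¹)ᵀ := by
    rw [hChol, Matrix.mul_inv_rev, Matrix.transpose_nonsing_inv]
  -- key matrix identities
  have hstep : L * (M⁻¹ * Aᵀ * A) = (Cᵀ * C) * L := by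
    rw [hMinv, hC, Matrix.transpose_mul]
    simp only [Matrix.mul_assoc]
    rw [← Matrix.mul_assoc L L⁻¹, hinv2, Matrix.one_mul, hinv1, Matrix.mul_one]
  have hpow : ∀ i : ℕ, L * (M⁻¹ * Aᵀ * A) ^ i = (Cᵀ * C) ^ i * L := by
    intro i
    induction i with
    | zero => simp
    | succ i ih =>
      rw [pow_succ, ← Matrix.mul_assoc, ih, Matrix.mul_assoc, hstep,
        ← Matrix.mul_assoc, ← pow_succ]
  have hkey : ∀ i : ℕ,
      L.mulVec (((M⁻¹ * Aᵀ * A) ^ i).mulVec ((M⁻¹ * Aᵀ).mulVec b))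
        = ((Cᵀ * C) ^ i).mulVec (Cᵀ.mulVec b) := by
    intro i
    have h2 : L * ((M⁻¹ * Aᵀ * A) ^ i * (M⁻¹ * Aᵀ)) = (Cᵀ * C) ^ i * Cᵀ := by
      rw [← Matrix.mul_assoc, hpow, Matrix.mul_assoc]
      congr 1
      rw [hMinv, hC, Matrix.transpose_mul]
      simp only [← Matrix.mul_assoc]
      rw [hinv2, Matrix.one_mul]
    simp only [Matrix.mulVec_mulVec]
    rw [h2]
  -- the linear map x ↦ L x carries Sk onto Kk
  have hmap : Sk.map (Matrix.mulVecLin L) = Kk := by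
    rw [hSk, hKk, Submodule.map_span]
    congr 1
    rw [← Set.range_comp]
    refine congrArg Set.range (funext fun i => ?_)
    simpa [Function.comp, Matrix.mulVecLin_apply] using hkey i
  have hSm : ∀ x ∈ Sk, L.mulVec x ∈ Kk := by
    intro x hx
    rw [← hmap]
    exact Submodule.mem_map_of_mem hx
  have hKm : ∀ y ∈ Kk, L⁻¹.mulVec y ∈ Sk := by
    intro y hy
    rw [← hmap] at hy
    obtain ⟨x, hx, rfl⟩ := hy
    simpa [Matrix.mulVecLin_apply, Matrix.mulVec_mulVec, hinv1] using hx
  have hLL : ∀ y : Fin n → ℝ, L.mulVec (L⁻¹.mulVec y) = y := by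
    intro y; rw [Matrix.mulVec_mulVec, hinv2, Matrix.one_mulVec]
  have hLL' : ∀ x : Fin n → ℝ, L⁻¹.mulVec (L.mulVec x) = x := by
    intro x; rw [Matrix.mulVec_mulVec, hinv1, Matrix.one_mulVec]
  -- residual correspondence
  have hres : ∀ x : Fin n → ℝ, A.mulVec x = C.mulVec (L.mulVec x) := by
    intro x
    rw [hC, Matrix.mulVec_mulVec, Matrix.mul_assoc, hinv1, Matrix.mul_one]
  have hres' : ∀ y : Fin n → ℝ, C.mulVec y = A.mulVec (L⁻¹.mulVec y) := by
    intro y; rw [hres, hLL]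
  -- mnorm correspondence
  have hmn : ∀ x : Fin n → ℝ, mnorm M x = eucNorm (L.mulVec x) := by
    intro x
    rw [mnorm, eucNorm, hChol, ← Matrix.mulVec_mulVec, Matrix.dotProduct_mulVec,
      Matrix.vecMul_transpose]
  -- u := L xk is a residual-minimizer in Kk
  set u : Fin n → ℝ := L.mulVec xk with hu
  have huK : u ∈ Kk := hSm xk hxk1
  have humin : ∀ z ∈ Kk, eucNorm (C.mulVec u - b) ≤ eucNorm (C.mulVec z - b) := by
    intro z hz
    rw [← hres, hres' z]
    exact hxk2 _ (hKm z hz)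
  -- hence ‖xbark‖ ≤ ‖u‖
  have h1 : eucNorm xbark ≤ eucNorm u := hxb3 u huK humin
  -- v := L⁻¹ xbark is a residual-minimizer in Sk, so mnorm xk ≤ mnorm v = ‖xbark‖
  have h2 : eucNorm u ≤ eucNorm xbark := by
    have hvS : L⁻¹.mulVec xbark ∈ Sk := hKm _ hxb1
    have hvmin : ∀ z ∈ Sk, eucNorm (A.mulVec (L⁻¹.mulVec xbark) - b) ≤ eucNorm (A.mulVec z - b) := by
      intro z hz
      rw [← hres', hres z]
      exact hxb2 _ (hSm z hz)
    have := hxk3 _ hvS hvmin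
    rwa [hmn, hmn, hLL, ← hu] at this
  have hnorm_eq : eucNorm u = eucNorm xbark := le_antisymm h2 h1
  -- uniqueness via strict convexity (midpoint argument)
  have huxb : u = xbark := by
    by_contra hne
    set w : Fin n → ℝ := (2 : ℝ)⁻¹ • (u + xbark) with hw
    have hwK : w ∈ Kk := Submodule.smul_mem _ _ (Submodule.add_mem _ huK hxb1)
    -- the residual of w is the average of the residuals
    have hresw : C.mulVec w - b
        = (2 : ℝ)⁻¹ • (C.mulVec u - b) + (2 : ℝ)⁻¹ • (C.mulVec xbark - b) := by
      rw [hw, Matrix.mulVec_smul, Matrix.mulVec_add]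
      funext i
      simp only [Pi.add_apply, Pi.sub_apply, Pi.smul_apply, smul_eq_mul]
      ring
    -- norms
    have hEn : ∀ {p : ℕ} (x : Fin p → ℝ),
        eucNorm x = ‖(WithLp.equiv 2 (Fin p → ℝ)).symm x‖ := fun x => enorm_eq_norm' x
    have hconv : eucNorm (C.mulVec w - b)
        ≤ (2 : ℝ)⁻¹ * eucNorm (C.mulVec u - b) + (2 : ℝ)⁻¹ * eucNorm (C.mulVec xbark - b) := by
      rw [hEn, hEn, hEn, hresw]
      calc ‖(WithLp.equiv 2 (Fin m → ℝ)).symm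
            ((2:ℝ)⁻¹ • (C.mulVec u - b) + (2:ℝ)⁻¹ • (C.mulVec xbark - b))‖
          = ‖(2:ℝ)⁻¹ • (WithLp.equiv 2 (Fin m → ℝ)).symm (C.mulVec u - b)
              + (2:ℝ)⁻¹ • (WithLp.equiv 2 (Fin m → ℝ)).symm (C.mulVec xbark - b)‖ := rfl
        _ ≤ ‖(2:ℝ)⁻¹ • (WithLp.equiv 2 (Fin m → ℝ)).symm (C.mulVec u - b)‖
              + ‖(2:ℝ)⁻¹ • (WithLp.equiv 2 (Fin m → ℝ)).symm (C.mulVec xbark - b)‖ :=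
            norm_add_le _ _
        _ = (2:ℝ)⁻¹ * ‖(WithLp.equiv 2 (Fin m → ℝ)).symm (C.mulVec u - b)‖
              + (2:ℝ)⁻¹ * ‖(WithLp.equiv 2 (Fin m → ℝ)).symm (C.mulVec xbark - b)‖ := by
            rw [norm_smul, norm_smul]; norm_num
    -- residual values of u and xbark agree (both are minimizers)
    have hresu : eucNorm (C.mulVec u - b) = eucNorm (C.mulVec xbark - b) :=
      le_antisymm (humin _ hxb1) (hxb2 _ huK)
    -- w is also a residual minimizer
    have hwmin : ∀ z ∈ Kk, eucNorm (C.mulVec w - b) ≤ eucNorm (C.mulVec z - b) := by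
      intro z hz
      refine le_trans ?_ (hxb2 z hz)
      calc eucNorm (C.mulVec w - b)
          ≤ (2:ℝ)⁻¹ * eucNorm (C.mulVec u - b) + (2:ℝ)⁻¹ * eucNorm (C.mulVec xbark - b) := hconv
        _ = eucNorm (C.mulVec xbark - b) := by rw [hresu]; ring
    have hge : eucNorm xbark ≤ eucNorm w := hxb3 w hwK hwmin
    -- but ‖w‖ < ‖xbark‖ by the parallelogram law
    set ι : (Fin n → ℝ) → WithLp 2 (Fin n → ℝ) := ⇑(WithLp.equiv 2 (Fin n → ℝ)).symm with hι
    have hιu : ι u ≠ ι xbark := fun h => hne ((WithLp.equiv 2 (Fin n → ℝ)).symm.injective h)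
    have hsub : ι u - ι xbark ≠ 0 := sub_ne_zero.mpr hιu
    have hpar : ‖ι u + ι xbark‖ ^ 2 + ‖ι u - ι xbark‖ ^ 2
        = 2 * (‖ι u‖ ^ 2 + ‖ι xbark‖ ^ 2) := by
      have := parallelogram_law_with_norm ℝ (ι u) (ι xbark)
      nlinarith [this]
    have hnu : ‖ι u‖ = ‖ι xbark‖ := by
      have := hnorm_eq
      rwa [hEn, hEn] at this
    have hlt : ‖ι u + ι xbark‖ ^ 2 < (2 * ‖ι xbark‖) ^ 2 := by
      have hpos : 0 < ‖ι u - ι xbark‖ ^ 2 := pow_pos (norm_pos_iff.mpr hsub) 2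
      have hnu2 : ‖ι u‖ ^ 2 = ‖ι xbark‖ ^ 2 := by rw [hnu]
      nlinarith [hpar, hnu2, hpos]
    have hlt2 : ‖ι u + ι xbark‖ < 2 * ‖ι xbark‖ := by
      have h2nn : (0:ℝ) ≤ 2 * ‖ι xbark‖ := by positivity
      exact lt_of_pow_lt_pow_left₀ 2 h2nn hlt
    have hwlt : eucNorm w < eucNorm xbark := by
      rw [hEn w, hEn xbark]
      show ‖ι w‖ < ‖ι xbark‖
      have hιw : ι w = (2:ℝ)⁻¹ • (ι u + ι xbark) := rfl
      rw [hιw, norm_smul]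
      simp only [norm_inv, Real.norm_ofNat]
      linarith [hlt2]
    exact absurd hge (not_le.mpr hwlt)
  rw [← huxb, hu, hLL']
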